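/- arXiv:2310.10582 — 6 statements merged into one kernel-verified Lean document; each statement's English description precedes it below -/
import Mathlib

section
/- For every density matrix ν, every t ∈ ℝ and every α ∈ ℂ, the moment generating function of the two-times measurement entropy production satisfies 𝔉_{ν,t}(α) := ∑_{(b,a)∈𝒜×𝒜} λ_b^{α}·λ_a^{−α}·p_{ν,t}(b,a) = trace(ω_{−t}^{α}·ω^{−α}·ν̄). (Here λ_b^{α}·λ_a^{−α} = exp(−α·ℰ(b,a)).) -/
open Matrix NormedSpace
open scoped ComplexOrder

noncomputable section

/-- The two-times measurement statistics
`p_{ν,t}(b,a) = trace(exp(−itH)·P_a·ν·P_a·exp(itH)·P_b)`. -/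
def ttm {n 𝒜 : Type*} [Fintype n] [DecidableEq n]
    (H : Matrix n n ℂ) (P : 𝒜 → Matrix n n ℂ) (ν : Matrix n n ℂ) (t : ℝ) (b a : 𝒜) : ℂ :=
  (exp ((-(Complex.I * t)) • H) * P a * ν * P a * exp ((Complex.I * t) • H) * P b).trace

/-- The complex power `ω^z = ∑_a λ_a^z · P_a` of `ω = ∑_a λ_a · P_a`. -/
def omegaPow {n 𝒜 : Type*} [Fintype 𝒜] (lam : 𝒜 → ℝ) (P : 𝒜 → Matrix n n ℂ) (z : ℂ) :
    Matrix n n ℂ :=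
  ∑ a, ((lam a : ℂ) ^ z) • P a

/-- The pinching `ν̄ = ∑_a P_a·ν·P_a`. -/
def pinch {n 𝒜 : Type*} [Fintype n] [Fintype 𝒜]
    (P : 𝒜 → Matrix n n ℂ) (ν : Matrix n n ℂ) : Matrix n n ℂ :=
  ∑ a, P a * ν * P a

/-! Since `P_a · ν̄ = P_a ν P_a`, the product `ω^{-α} ν̄` collapses to `∑_a λ_a^{-α} P_a ν P_a`;
expanding `ω_{-t}^α = ∑_b λ_b^α e^{itH} P_b e^{-itH}` and rotating each trace term gives the
two-times measurement probabilities. -/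

namespace OrthogonalIdempotents

variable {R ι : Type*} [Semiring R] [Fintype ι] {e : ι → R}

theorem mul_sum_mul_mul_self (he : OrthogonalIdempotents e) (x : R) (i : ι) :
    e i * ∑ j, e j * x * e j = e i * x * e i := by
  rw [Finset.mul_sum, Finset.sum_eq_single i]
  · rw [← mul_assoc, ← mul_assoc, (he.idem i).eq]
  · intro j _ hji
    rw [← mul_assoc, ← mul_assoc, he.ortho hji.symm, zero_mul, zero_mul]
  · simp

theorem sum_smul_mul_sum_mul_mul_self {S : Type*} [SMul S R] [IsScalarTower S R R]
    (he : OrthogonalIdempotents e) (c : ι → S) (x : R) :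
    (∑ i, c i • e i) * ∑ j, e j * x * e j = ∑ i, c i • (e i * x * e i) := by
  simp only [Finset.sum_mul, smul_mul_assoc, he.mul_sum_mul_mul_self]

end OrthogonalIdempotents

theorem ttm_eq_trace {n 𝒜 : Type*} [Fintype n] [DecidableEq n]
    (H : Matrix n n ℂ) (P : 𝒜 → Matrix n n ℂ) (ν : Matrix n n ℂ) (t : ℝ) (b a : 𝒜) :
    ttm H P ν t b a = (exp ((Complex.I * t) • H) * P b * exp ((-(Complex.I * t)) • H) *
      (P a * ν * P a)).trace := by
  set E := exp ((-(Complex.I * t)) • H)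
  set F := exp ((Complex.I * t) • H)
  rw [ttm, show E * P a * ν * P a * F * P b = (E * (P a * ν * P a)) * (F * P b) by
    simp only [Matrix.mul_assoc], trace_mul_comm]
  simp only [Matrix.mul_assoc]

theorem mgf_eq_trace_cocycle_general
    {n 𝒜 : Type*} [Fintype n] [DecidableEq n]
    [Fintype 𝒜]
    (H : Matrix n n ℂ)
    (P : 𝒜 → Matrix n n ℂ)
    (hPidem : ∀ a, P a * P a = P a)
    (hPorth : ∀ a b, a ≠ b → P a * P b = 0)
    (lam : 𝒜 → ℝ)
    (ν : Matrix n n ℂ)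
    (t : ℝ) (α : ℂ) :
    ∑ x : 𝒜 × 𝒜, (lam x.1 : ℂ) ^ α * (lam x.2 : ℂ) ^ (-α) * ttm H P ν t x.1 x.2 =
      (exp ((Complex.I * t) • H) * omegaPow lam P α * exp ((-(Complex.I * t)) • H) *
        omegaPow lam P (-α) * pinch P ν).trace := by
  have hP : OrthogonalIdempotents P := ⟨hPidem, fun a b hab => hPorth a b hab⟩
  rw [Matrix.mul_assoc _ (omegaPow lam P (-α))]
  unfold omegaPow pinch
  rw [hP.sum_smul_mul_sum_mul_mul_self, Fintype.sum_prod_type]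
  simp only [Matrix.sum_mul, Matrix.smul_mul, Matrix.mul_smul, trace_sum,
    trace_smul, smul_eq_mul, ttm_eq_trace, Finset.mul_sum]
  rw [Finset.sum_comm]
  refine Finset.sum_congr rfl fun b _ => Finset.sum_congr rfl fun a _ => ?_
  ring

theorem mgf_eq_trace_cocycle
    {n 𝒜 : Type*} [Fintype n] [DecidableEq n] [Nonempty n]
    [Fintype 𝒜] [DecidableEq 𝒜] [Nonempty 𝒜]
    (H : Matrix n n ℂ) (hH : H.IsHermitian)
    (P : 𝒜 → Matrix n n ℂ)
    (hPherm : ∀ a, (P a).IsHermitian)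
    (hPidem : ∀ a, P a * P a = P a)
    (hPne : ∀ a, P a ≠ 0)
    (hPorth : ∀ a b, a ≠ b → P a * P b = 0)
    (hPsum : ∑ a, P a = 1)
    (lam : 𝒜 → ℝ) (hlampos : ∀ a, 0 < lam a)
    (hlaminj : Function.Injective lam)
    (hlamsum : ∑ a, (lam a : ℂ) * (P a).trace = 1)
    (ν : Matrix n n ℂ) (hν : ν.PosSemidef) (hνtr : ν.trace = 1)
    (t : ℝ) (α : ℂ) :
    ∑ x : 𝒜 × 𝒜, (lam x.1 : ℂ) ^ α * (lam x.2 : ℂ) ^ (-α) * ttm H P ν t x.1 x.2 =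
      (exp ((Complex.I * t) • H) * omegaPow lam P α * exp ((-(Complex.I * t)) • H) *
        omegaPow lam P (-α) * pinch P ν).trace :=
  mgf_eq_trace_cocycle_general H P hPidem hPorth lam ν t α
end
end

section
/- (Finite-dimensional form of Theorem 2(4).) Under the time-reversal invariance assumption, the entropy production distribution Q_{ω,t}(s) = ∑_{(b,a): ℰ(b,a)=s} p_{ω,t}(b,a) satisfies, for every t ∈ ℝ and every s ∈ ℝ: ∑_{(b,a)∈𝒜×𝒜, ℰ(b,a) = −s} p_{ω,t}(b,a) = exp(−s) · ∑_{(b,a)∈𝒜×𝒜, ℰ(b,a) = s} p_{ω,t}(b,a). (Equivalently, the reflected measure Q̄_{ω,t} = Q_{ω,t}∘r with r(s) = −s satisfies dQ̄_{ω,t}/dQ_{ω,t}(s) = e^{−s}.) -/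
open Matrix NormedSpace
open scoped ComplexOrder

noncomputable section

/-! Pinching `ω` by `P_a` gives `λ_a P_a`, so `p_{ω,t}(b,a) = λ_a · tr(e^{-itH} P_a e^{itH} P_b)`.
This trace is symmetric in `a` and `b`: its complex conjugate can be computed either through the
adjoint, which reverses the order of the factors, or through the antiunitary time reversal
`X ↦ U conj(X) U*`, which fixes `H` and every `P_a` and keeps the order. Hence detailed balance
`λ_b p(b,a) = λ_a p(a,b)`, and the swap `(b,a) ↦ (a,b)` turns entropy production `-s` into `s`
at the cost of the factor `λ_a / λ_b = e^{-s}`. -/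

namespace Matrix

variable {n : Type*} [Fintype n] [DecidableEq n]

def timeReversal (U : unitaryGroup n ℂ) : Matrix n n ℂ →+* Matrix n n ℂ :=
  (Unitary.conjStarAlgAut ℂ (Matrix n n ℂ) U).toRingHom.comp (starRingEnd ℂ).mapMatrix

theorem timeReversal_apply (U : unitaryGroup n ℂ) (X : Matrix n n ℂ) :
    timeReversal U X = (U : Matrix n n ℂ) * X.map (starRingEnd ℂ) * (U : Matrix n n ℂ)ᴴ :=
  rfl

theorem timeReversal_smul (U : unitaryGroup n ℂ) (c : ℂ) (X : Matrix n n ℂ) :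
    timeReversal U (c • X) = star c • timeReversal U X := by
  have hmap : (c • X).map (starRingEnd ℂ) = star c • X.map (starRingEnd ℂ) := by
    ext; simp
  rw [timeReversal_apply, timeReversal_apply, hmap, Matrix.mul_smul, Matrix.smul_mul]

theorem trace_timeReversal (U : unitaryGroup n ℂ) (X : Matrix n n ℂ) :
    (timeReversal U X).trace = star X.trace := by
  rw [timeReversal_apply, trace_mul_cycle, ← star_eq_conjTranspose,
    Unitary.star_mul_self_of_mem U.2, one_mul]
  simp [trace]

theorem exp_map_starRingEnd (A : Matrix n n ℂ) :
    exp (A.map (starRingEnd ℂ)) = (exp A).map (starRingEnd ℂ) := by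
  have hmap (C : Matrix n n ℂ) : C.map (starRingEnd ℂ) = Cᴴᵀ := by
    ext; simp
  rw [hmap, hmap, exp_transpose, exp_conjTranspose]

theorem timeReversal_exp (U : unitaryGroup n ℂ) (X : Matrix n n ℂ) :
    timeReversal U (exp X) = exp (timeReversal U X) := by
  have hinv : (U : Matrix n n ℂ)⁻¹ = (U : Matrix n n ℂ)ᴴ :=
    inv_eq_right_inv (mem_unitaryGroup_iff.mp U.2)
  rw [timeReversal_apply, timeReversal_apply, ← exp_map_starRingEnd, ← hinv,
    exp_conj (U : Matrix n n ℂ) _ (Unitary.toUnits U).isUnit]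

theorem trace_exp_mul_exp_mul_comm {H A B : Matrix n n ℂ} (hH : H.IsHermitian)
    (hA : A.IsHermitian) (hB : B.IsHermitian) (U : unitaryGroup n ℂ)
    (hUH : timeReversal U H = H) (hUA : timeReversal U A = A) (hUB : timeReversal U B = B)
    (w z : ℂ) :
    (exp (w • H) * A * exp (z • H) * B).trace = (exp (w • H) * B * exp (z • H) * A).trace := by
  have hexp (u : ℂ) : (exp (u • H))ᴴ = exp (star u • H) := by
    rw [← exp_conjTranspose, conjTranspose_smul, hH.eq]
  set M := exp (star w • H) * A * exp (star z • H) * B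
  calc (exp (w • H) * A * exp (z • H) * B).trace
      = (timeReversal U M).trace := by
        simp only [M, map_mul, timeReversal_exp, timeReversal_smul, hUH, star_star, hUA, hUB]
    _ = Mᴴ.trace := by rw [trace_timeReversal, trace_conjTranspose]
    _ = (B * exp (z • H) * A * exp (w • H)).trace := by
        simp only [M, conjTranspose_mul, hexp, star_star, hA.eq, hB.eq, Matrix.mul_assoc]
    _ = (exp (w • H) * B * exp (z • H) * A).trace := by
        rw [trace_mul_comm]
        simp only [Matrix.mul_assoc]

end Matrix

theorem mul_sum_smul_mul_self {K R ι : Type*} [CommSemiring K] [Semiring R] [Algebra K R]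
    [Fintype ι] {P : ι → R} (hPidem : ∀ a, P a * P a = P a)
    (hPorth : ∀ a b, a ≠ b → P a * P b = 0) (μ : ι → K) (a : ι) :
    P a * (∑ c, μ c • P c) * P a = μ a • P a := by
  rw [Finset.mul_sum, Finset.sum_mul, Finset.sum_eq_single_of_mem a (Finset.mem_univ a)]
  · rw [mul_smul_comm, smul_mul_assoc, hPidem a, hPidem a]
  · intro c _ hca
    rw [mul_smul_comm, smul_mul_assoc, hPorth a c hca.symm, zero_mul, smul_zero]

section TwoTimesMeasurement

variable {n 𝒜 : Type*} [Fintype n] [DecidableEq n] [Fintype 𝒜] {H : Matrix n n ℂ}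
  {P : 𝒜 → Matrix n n ℂ}

theorem ttm_sum_smul (hPidem : ∀ a, P a * P a = P a) (hPorth : ∀ a b, a ≠ b → P a * P b = 0)
    (μ : 𝒜 → ℂ) (t : ℝ) (b a : 𝒜) :
    ttm H P (∑ c, μ c • P c) t b a =
      μ a * (exp ((-(Complex.I * t)) • H) * P a * exp ((Complex.I * t) • H) * P b).trace := by
  rw [ttm, Matrix.mul_assoc (_ * P a) _ (P a), Matrix.mul_assoc _ (P a), ← Matrix.mul_assoc (P a),
    mul_sum_smul_mul_self hPidem hPorth]
  simp only [Matrix.mul_smul, Matrix.smul_mul, trace_smul, smul_eq_mul]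

theorem ttm_detailed_balance (hH : H.IsHermitian) (hPherm : ∀ a, (P a).IsHermitian)
    (hPidem : ∀ a, P a * P a = P a) (hPorth : ∀ a b, a ≠ b → P a * P b = 0)
    (U : unitaryGroup n ℂ) (hUH : timeReversal U H = H) (hUP : ∀ a, timeReversal U (P a) = P a)
    (μ : 𝒜 → ℂ) (t : ℝ) (a b : 𝒜) :
    μ b * ttm H P (∑ c, μ c • P c) t b a = μ a * ttm H P (∑ c, μ c • P c) t a b := by
  rw [ttm_sum_smul hPidem hPorth, ttm_sum_smul hPidem hPorth,
    trace_exp_mul_exp_mul_comm hH (hPherm a) (hPherm b) U hUH (hUP a) (hUP b)]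
  ring

end TwoTimesMeasurement

open Classical in
theorem fluctuation_relation_of_detailed_balance {𝒜 : Type*} [Fintype 𝒜] {lam : 𝒜 → ℝ}
    (hlam : ∀ a, 0 < lam a) {p : 𝒜 → 𝒜 → ℂ} (hp : ∀ a b, (lam b : ℂ) * p b a = lam a * p a b)
    (s : ℝ) :
    ∑ x : 𝒜 × 𝒜, (if Real.log (lam x.2) - Real.log (lam x.1) = -s then p x.1 x.2 else 0) =
      (Real.exp (-s) : ℂ) *
        ∑ x : 𝒜 × 𝒜, (if Real.log (lam x.2) - Real.log (lam x.1) = s then p x.1 x.2 else 0) := by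
  rw [Finset.mul_sum]
  refine Fintype.sum_equiv (Equiv.prodComm 𝒜 𝒜) _ _ fun ⟨b, a⟩ => ?_
  simp only [Equiv.prodComm_apply, Prod.swap_prod_mk]
  by_cases hs : Real.log (lam a) - Real.log (lam b) = -s
  · have hs' : Real.log (lam b) - Real.log (lam a) = s := by linarith
    have hlam_a : lam a = Real.exp (-s) * lam b := by
      rw [← Real.exp_log (hlam a), ← Real.exp_log (hlam b), ← Real.exp_add]
      congr 1
      linarith
    have hb : (lam b : ℂ) ≠ 0 := by exact_mod_cast (hlam b).ne'
    simp only [hs, hs', ↓reduceIte]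
    apply mul_left_cancel₀ hb
    rw [hp, hlam_a]
    push_cast
    ring
  · have hs' : Real.log (lam b) - Real.log (lam a) ≠ s := fun h => hs (by linarith)
    simp only [hs, hs', ↓reduceIte, mul_zero]

open Classical in
theorem entropy_production_fluctuation_relation_general
    {n 𝒜 : Type*} [Fintype n] [DecidableEq n]
    [Fintype 𝒜]
    (H : Matrix n n ℂ) (hH : H.IsHermitian)
    (P : 𝒜 → Matrix n n ℂ)
    (hPherm : ∀ a, (P a).IsHermitian)
    (hPidem : ∀ a, P a * P a = P a)
    (hPorth : ∀ a b, a ≠ b → P a * P b = 0)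
    (lam : 𝒜 → ℝ) (hlampos : ∀ a, 0 < lam a)
    (hTR : ∃ U : Matrix n n ℂ, U * Uᴴ = 1 ∧ Uᴴ * U = 1 ∧
      U * U.map (starRingEnd ℂ) = 1 ∧
      U * H.map (starRingEnd ℂ) * Uᴴ = H ∧
      ∀ a, U * (P a).map (starRingEnd ℂ) * Uᴴ = P a)
    (t : ℝ) (s : ℝ) :
    ∑ x : 𝒜 × 𝒜,
        (if Real.log (lam x.2) - Real.log (lam x.1) = -s then
          ttm H P (∑ c, (lam c : ℂ) • P c) t x.1 x.2 else 0) =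
      (Real.exp (-s) : ℂ) *
        ∑ x : 𝒜 × 𝒜,
          (if Real.log (lam x.2) - Real.log (lam x.1) = s then
            ttm H P (∑ c, (lam c : ℂ) • P c) t x.1 x.2 else 0) := by
  obtain ⟨U, hU, -, -, hUH, hUP⟩ := hTR
  let V : unitaryGroup n ℂ := ⟨U, mem_unitaryGroup_iff.mpr hU⟩
  exact fluctuation_relation_of_detailed_balance hlampos
    (ttm_detailed_balance hH hPherm hPidem hPorth V hUH hUP (fun c => (lam c : ℂ)) t) s

open Classical in
theorem entropy_production_fluctuation_relation
    {n 𝒜 : Type*} [Fintype n] [DecidableEq n] [Nonempty n]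
    [Fintype 𝒜] [DecidableEq 𝒜] [Nonempty 𝒜]
    (H : Matrix n n ℂ) (hH : H.IsHermitian)
    (P : 𝒜 → Matrix n n ℂ)
    (hPherm : ∀ a, (P a).IsHermitian)
    (hPidem : ∀ a, P a * P a = P a)
    (hPne : ∀ a, P a ≠ 0)
    (hPorth : ∀ a b, a ≠ b → P a * P b = 0)
    (hPsum : ∑ a, P a = 1)
    (lam : 𝒜 → ℝ) (hlampos : ∀ a, 0 < lam a)
    (hlaminj : Function.Injective lam)
    (hlamsum : ∑ a, (lam a : ℂ) * (P a).trace = 1)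
    (hTR : ∃ U : Matrix n n ℂ, U * Uᴴ = 1 ∧ Uᴴ * U = 1 ∧
      U * U.map (starRingEnd ℂ) = 1 ∧
      U * H.map (starRingEnd ℂ) * Uᴴ = H ∧
      ∀ a, U * (P a).map (starRingEnd ℂ) * Uᴴ = P a)
    (t : ℝ) (s : ℝ) :
    ∑ x : 𝒜 × 𝒜,
        (if Real.log (lam x.2) - Real.log (lam x.1) = -s then
          ttm H P (∑ c, (lam c : ℂ) • P c) t x.1 x.2 else 0) =
      (Real.exp (-s) : ℂ) *
        ∑ x : 𝒜 × 𝒜,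
          (if Real.log (lam x.2) - Real.log (lam x.1) = s then
            ttm H P (∑ c, (lam c : ℂ) • P c) t x.1 x.2 else 0) :=
  entropy_production_fluctuation_relation_general H hH P hPherm hPidem hPorth lam hlampos hTR t s
end
end

section
/- Under the time-reversal invariance assumption, the transition weights are symmetric: for all t ∈ ℝ and all a, b ∈ 𝒜, trace(exp(−itH)·P_a·exp(itH)·P_b) = trace(exp(−itH)·P_b·exp(itH)·P_a). -/
open Matrix NormedSpace

/-! With `V = exp (-itH)`, the weight `w a b = tr (V P_a Vᴴ P_b)` is real, being the trace of a
product of two Hermitian matrices. The time-reversal map `X ↦ U conj(X) Uᴴ` is multiplicative,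
commutes with `exp`, conjugates scalars and traces, and fixes `H` and every `P_a`; hence it sends
`V` to `Vᴴ`, and `conj (w a b) = tr (Vᴴ P_a V P_b) = w b a` by cyclicity of the trace. -/

namespace Matrix

variable {𝕜 n : Type*} [RCLike 𝕜] [Fintype n]

theorem star_trace_mul_of_isHermitian {A B : Matrix n n 𝕜} (hA : A.IsHermitian)
    (hB : B.IsHermitian) : star (A * B).trace = (A * B).trace := by
  rw [← trace_conjTranspose, conjTranspose_mul, hA.eq, hB.eq, trace_mul_comm]

/-- The action on matrices of the antiunitary time-reversal operator `U ∘ conj`. -/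
def antiunitaryConj (U X : Matrix n n 𝕜) : Matrix n n 𝕜 :=
  U * X.map (starRingEnd 𝕜) * Uᴴ

variable {U : Matrix n n 𝕜}

theorem antiunitaryConj_smul (c : 𝕜) (X : Matrix n n 𝕜) :
    antiunitaryConj U (c • X) = star c • antiunitaryConj U X := by
  rw [antiunitaryConj, antiunitaryConj, map_smul' _ _ _ (map_mul _), Matrix.mul_smul,
    Matrix.smul_mul]
  rfl

variable [DecidableEq n]

theorem IsHermitian.conjTranspose_exp_smul {H : Matrix n n 𝕜} (hH : H.IsHermitian) (c : 𝕜) :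
    (NormedSpace.exp (c • H))ᴴ = NormedSpace.exp (star c • H) := by
  rw [← exp_conjTranspose, conjTranspose_smul, hH.eq]

theorem map_conj_exp (A : Matrix n n 𝕜) :
    (exp A).map (starRingEnd 𝕜) = exp (A.map (starRingEnd 𝕜)) := by
  change (exp A)ᴴᵀ = exp Aᴴᵀ
  rw [← exp_conjTranspose, ← exp_transpose]

theorem antiunitaryConj_mul (hU : Uᴴ * U = 1) (X Y : Matrix n n 𝕜) :
    antiunitaryConj U (X * Y) = antiunitaryConj U X * antiunitaryConj U Y := by
  simp only [antiunitaryConj, Matrix.map_mul, Matrix.mul_assoc]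
  rw [← Matrix.mul_assoc Uᴴ, hU, Matrix.one_mul]

theorem trace_antiunitaryConj (hU : Uᴴ * U = 1) (X : Matrix n n 𝕜) :
    (antiunitaryConj U X).trace = star X.trace := by
  rw [antiunitaryConj, trace_mul_cycle, hU, Matrix.one_mul, ← trace_conjTranspose,
    ← trace_transpose]
  rfl

theorem antiunitaryConj_exp (hU : Uᴴ * U = 1) (X : Matrix n n 𝕜) :
    antiunitaryConj U (exp X) = exp (antiunitaryConj U X) := by
  have hinv : U⁻¹ = Uᴴ := inv_eq_left_inv hU
  rw [antiunitaryConj, antiunitaryConj, map_conj_exp, ← hinv,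
    exp_conj _ _ (IsUnit.of_mul_eq_one_right _ hU)]

theorem antiunitaryConj_exp_smul (hU : Uᴴ * U = 1) {H : Matrix n n 𝕜}
    (hH : antiunitaryConj U H = H) (c : 𝕜) :
    antiunitaryConj U (exp (c • H)) = exp (star c • H) := by
  rw [antiunitaryConj_exp hU, antiunitaryConj_smul, hH]

end Matrix

theorem transition_weights_symmetric_general
    {n 𝒜 : Type*} [Fintype n] [DecidableEq n]
    (H : Matrix n n ℂ) (hH : H.IsHermitian)
    (P : 𝒜 → Matrix n n ℂ)
    (hPherm : ∀ a, (P a).IsHermitian)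
    (hTR : ∃ U : Matrix n n ℂ, U * Uᴴ = 1 ∧ Uᴴ * U = 1 ∧
      U * U.map (starRingEnd ℂ) = 1 ∧
      U * H.map (starRingEnd ℂ) * Uᴴ = H ∧
      ∀ a, U * (P a).map (starRingEnd ℂ) * Uᴴ = P a)
    (t : ℝ) (a b : 𝒜) :
    (NormedSpace.exp ((-(Complex.I * t)) • H) * P a * NormedSpace.exp ((Complex.I * t) • H) * P b).trace =
      (NormedSpace.exp ((-(Complex.I * t)) • H) * P b * NormedSpace.exp ((Complex.I * t) • H) * P a).trace := by
  obtain ⟨U, -, hU, -, hUH, hUP⟩ := hTR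
  replace hUP : ∀ x, antiunitaryConj U (P x) = P x := hUP
  set c : ℂ := Complex.I * t
  have hc : star c = -c := by simp [c]
  have hV : (exp (-c • H))ᴴ = exp (c • H) := by
    rw [hH.conjTranspose_exp_smul, star_neg, hc, neg_neg]
  have hreal : star (exp (-c • H) * P a * exp (c • H) * P b).trace =
      (exp (-c • H) * P a * exp (c • H) * P b).trace := by
    rw [← hV]
    exact star_trace_mul_of_isHermitian (isHermitian_mul_mul_conjTranspose _ (hPherm a)) (hPherm b)
  have hreversed : star (exp (-c • H) * P a * exp (c • H) * P b).trace =
      (exp (c • H) * P a * exp (-c • H) * P b).trace := by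
    rw [← trace_antiunitaryConj hU, antiunitaryConj_mul hU, antiunitaryConj_mul hU,
      antiunitaryConj_mul hU, antiunitaryConj_exp_smul hU hUH, antiunitaryConj_exp_smul hU hUH,
      hUP, hUP, star_neg, hc, neg_neg]
  rw [← hreal, hreversed, Matrix.mul_assoc (_ * P a), trace_mul_comm, ← Matrix.mul_assoc]

theorem transition_weights_symmetric
    {n 𝒜 : Type*} [Fintype n] [DecidableEq n] [Nonempty n]
    [Fintype 𝒜] [DecidableEq 𝒜] [Nonempty 𝒜]
    (H : Matrix n n ℂ) (hH : H.IsHermitian)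
    (P : 𝒜 → Matrix n n ℂ)
    (hPherm : ∀ a, (P a).IsHermitian)
    (hPidem : ∀ a, P a * P a = P a)
    (hPne : ∀ a, P a ≠ 0)
    (hPorth : ∀ a b, a ≠ b → P a * P b = 0)
    (hPsum : ∑ a, P a = 1)
    (hTR : ∃ U : Matrix n n ℂ, U * Uᴴ = 1 ∧ Uᴴ * U = 1 ∧
      U * U.map (starRingEnd ℂ) = 1 ∧
      U * H.map (starRingEnd ℂ) * Uᴴ = H ∧
      ∀ a, U * (P a).map (starRingEnd ℂ) * Uᴴ = P a)
    (t : ℝ) (a b : 𝒜) :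
    (NormedSpace.exp ((-(Complex.I * t)) • H) * P a * NormedSpace.exp ((Complex.I * t) • H) * P b).trace =
      (NormedSpace.exp ((-(Complex.I * t)) • H) * P b * NormedSpace.exp ((Complex.I * t) • H) * P a).trace :=
  transition_weights_symmetric_general H hH P hPherm hTR t a b
end

section
/- (Decoherence by modular time-averaging; the finite-dimensional von Neumann ergodic average underlying formula (st-cyr).) For every matrix M ∈ Matrix n n ℂ, the Cesàro average of the modular evolution converges to the pinching: (1/R)·∫_0^R ω^{iθ}·M·ω^{−iθ} dθ tends, as R → ∞, to ∑_a P_a·M·P_a (convergence entrywise, equivalently in any norm on matrices). Here ω^{iθ} = ∑_a λ_a^{iθ}·P_a. -/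
open Matrix NormedSpace
open scoped ComplexOrder

noncomputable section

/-! Entrywise, `ω^{iθ} M ω^{-iθ}` is the trigonometric polynomial
`∑_{a,b} e^{iθ(log λ_a - log λ_b)} (P_a M P_b)_{ij}` in `θ`. The Cesàro mean of `e^{iμθ}` tends
to `1` when `μ = 0` and to `0` otherwise, its integral over `[0, R]` being bounded by `2/|μ|`.
Since `λ` is injective and positive, the frequency `log λ_a - log λ_b` vanishes only for `a = b`,
so only the diagonal terms `(P_a M P_a)_{ij}` survive, and they sum to the pinching. -/

open Complex Filter Topology

theorem tendsto_average_cexp_ofReal_mul_I (μ : ℝ) :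
    Tendsto (fun R : ℝ => (1 / R : ℝ) • ∫ θ in (0:ℝ)..R, cexp (μ * I * θ))
      atTop (𝓝 (if μ = 0 then 1 else 0)) := by
  split_ifs with hμ
  · subst hμ
    refine tendsto_const_nhds.congr' ?_
    filter_upwards [eventually_gt_atTop 0] with R hR
    simp [hR.ne']
  · have hμI : (μ * I : ℂ) ≠ 0 := by simp [hμ]
    have hbound : IsBoundedUnder (· ≤ ·) atTop
        (norm ∘ fun R : ℝ => ∫ θ in (0:ℝ)..R, cexp (μ * I * θ)) := by
      refine isBoundedUnder_of ⟨2 / ‖(μ * I : ℂ)‖, fun R => ?_⟩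
      rw [Function.comp_apply, integral_exp_mul_complex hμI, norm_div]
      gcongr
      calc ‖cexp (μ * I * R) - cexp (μ * I * (0:ℝ))‖
          ≤ ‖cexp (μ * I * R)‖ + ‖cexp (μ * I * (0:ℝ))‖ := norm_sub_le _ _
        _ = 2 := by
          rw [mul_comm (μ:ℂ) I, mul_assoc, mul_assoc, ← ofReal_mul, ← ofReal_mul,
            norm_exp_I_mul_ofReal, norm_exp_I_mul_ofReal]
          norm_num
    simpa using (tendsto_inv_atTop_zero (𝕜 := ℝ)).zero_smul_isBoundedUnder_le hbound

theorem tendsto_average_sum_cexp_mul {ι : Type*} (s : Finset ι) (μ : ι → ℝ) (c : ι → ℂ) :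
    Tendsto (fun R : ℝ => (1 / R : ℝ) • ∫ θ in (0:ℝ)..R, ∑ k ∈ s, cexp (μ k * I * θ) * c k)
      atTop (𝓝 (∑ k ∈ s with μ k = 0, c k)) := by
  have hintegrable : ∀ k, ∀ R : ℝ, IntervalIntegrable (fun θ : ℝ => cexp (μ k * I * θ) * c k)
      MeasureTheory.volume 0 R := fun k R =>
    (by fun_prop : Continuous fun θ : ℝ => cexp (μ k * I * θ) * c k).intervalIntegrable _ _
  have hsplit : ∀ R : ℝ, (1 / R : ℝ) • ∫ θ in (0:ℝ)..R, ∑ k ∈ s, cexp (μ k * I * θ) * c k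
      = ∑ k ∈ s, ((1 / R : ℝ) • ∫ θ in (0:ℝ)..R, cexp (μ k * I * θ)) * c k := by
    intro R
    simp only [intervalIntegral.integral_finsetSum fun k _ => hintegrable k R,
      intervalIntegral.integral_mul_const, Finset.smul_sum, smul_mul_assoc]
  rw [Finset.sum_filter]
  simp only [hsplit]
  refine tendsto_finsetSum _ fun k _ => ?_
  simpa only [ite_mul, one_mul, zero_mul] using
    (tendsto_average_cexp_ofReal_mul_I (μ k)).mul_const (c k)

theorem omegaPow_mul_mul_omegaPow {n 𝒜 : Type*} [Fintype n] [Fintype 𝒜]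
    (lam : 𝒜 → ℝ) (P : 𝒜 → Matrix n n ℂ) (M : Matrix n n ℂ) (z w : ℂ) :
    omegaPow lam P z * M * omegaPow lam P w
      = ∑ a, ∑ b, ((lam a : ℂ) ^ z * (lam b : ℂ) ^ w) • (P a * M * P b) := by
  simp only [omegaPow, Finset.sum_mul, Finset.mul_sum, Finset.smul_sum, smul_mul_assoc,
    mul_smul_comm, smul_smul]
  rw [Finset.sum_comm]
  exact Finset.sum_congr rfl fun a _ => Finset.sum_congr rfl fun b _ => by rw [mul_comm]

theorem ofReal_cpow_I_mul_mul_ofReal_cpow_neg_I_mul {x y : ℝ} (hx : 0 < x) (hy : 0 < y) (θ : ℝ) :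
    (x : ℂ) ^ (I * θ) * (y : ℂ) ^ (-(I * θ)) = cexp ((Real.log x - Real.log y : ℝ) * I * θ) := by
  rw [cpow_def_of_ne_zero (ofReal_ne_zero.mpr hx.ne'),
    cpow_def_of_ne_zero (ofReal_ne_zero.mpr hy.ne'), ← ofReal_log hx.le, ← ofReal_log hy.le,
    ← Complex.exp_add]
  push_cast
  ring_nf

theorem modular_time_average_tendsto_pinching_general
    {n 𝒜 : Type*} [Fintype n] [Fintype 𝒜]
    (P : 𝒜 → Matrix n n ℂ)
    (lam : 𝒜 → ℝ) (hlampos : ∀ a, 0 < lam a)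
    (hlaminj : Function.Injective lam)
    (M : Matrix n n ℂ) (i j : n) :
    Filter.Tendsto
      (fun R : ℝ => (1 / R : ℝ) •
        ∫ θ in (0:ℝ)..R,
          (omegaPow lam P (Complex.I * θ) * M * omegaPow lam P (-(Complex.I * θ))) i j)
      Filter.atTop (nhds ((pinch P M) i j)) := by
  set μ : 𝒜 × 𝒜 → ℝ := fun p => Real.log (lam p.1) - Real.log (lam p.2)
  set c : 𝒜 × 𝒜 → ℂ := fun p => (P p.1 * M * P p.2) i j
  have hentry : ∀ θ : ℝ, (omegaPow lam P (I * θ) * M * omegaPow lam P (-(I * θ))) i j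
      = ∑ p, cexp (μ p * I * θ) * c p := by
    intro θ
    simp only [omegaPow_mul_mul_omegaPow, Matrix.sum_apply, Matrix.smul_apply, smul_eq_mul,
      ofReal_cpow_I_mul_mul_ofReal_cpow_neg_I_mul (hlampos _) (hlampos _), Fintype.sum_prod_type,
      μ, c]
  have hμ : ∀ a b, μ (a, b) = 0 ↔ a = b := fun a b => by
    simp only [μ, sub_eq_zero]
    exact (Real.log_injOn_pos.eq_iff (hlampos _) (hlampos _)).trans hlaminj.eq_iff
  have hpinch : pinch P M i j = ∑ p with μ p = 0, c p := by
    classical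
    simp only [hμ, Finset.sum_filter, Fintype.sum_prod_type, Finset.sum_ite_eq, Finset.mem_univ,
      if_true, pinch, Matrix.sum_apply, c]
  simp only [hentry, hpinch]
  exact tendsto_average_sum_cexp_mul _ μ c

theorem modular_time_average_tendsto_pinching
    {n 𝒜 : Type*} [Fintype n] [DecidableEq n] [Nonempty n]
    [Fintype 𝒜] [DecidableEq 𝒜] [Nonempty 𝒜]
    (P : 𝒜 → Matrix n n ℂ)
    (hPherm : ∀ a, (P a).IsHermitian)
    (hPidem : ∀ a, P a * P a = P a)
    (hPne : ∀ a, P a ≠ 0)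
    (hPorth : ∀ a b, a ≠ b → P a * P b = 0)
    (hPsum : ∑ a, P a = 1)
    (lam : 𝒜 → ℝ) (hlampos : ∀ a, 0 < lam a)
    (hlaminj : Function.Injective lam)
    (M : Matrix n n ℂ) (i j : n) :
    Filter.Tendsto
      (fun R : ℝ => (1 / R : ℝ) •
        ∫ θ in (0:ℝ)..R,
          (omegaPow lam P (Complex.I * θ) * M * omegaPow lam P (-(Complex.I * θ))) i j)
      Filter.atTop (nhds ((pinch P M) i j)) :=
  modular_time_average_tendsto_pinching_general P lam hlampos hlaminj M i j
end
end

section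
/- (Formula (st-cyr) for finite quantum systems.) For every density matrix ν, every t ∈ ℝ and every α ∈ ℂ: lim_{R→∞} (1/R)·∫_0^R trace( ν · ω^{iθ} · ω_{−t}^{α} · ω^{−α} · ω^{−iθ} ) dθ = ∑_{(b,a)∈𝒜×𝒜} λ_b^{α}·λ_a^{−α}·p_{ν,t}(b,a), i.e. the time-averaged expectation in the state ν of the modular-evolved Connes cocycle [Dω_{−t}:Dω]_α = ω_{−t}^{α}·ω^{−α} equals the moment generating function 𝔉_{ν,t}(α) of the two-times measurement entropy production. -/
open Matrix NormedSpace
open scoped ComplexOrder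

noncomputable section

/-!
Expanding `ω^{iθ}` and `ω^{-α-iθ}` in the spectral projections turns the integrand into a
trigonometric polynomial `∑_{(b,a)} e^{iθ (log λ_b - log λ_a)} K_{b,a}`. Its Cesàro mean over
`[0, R]` tends to the sum of the resonant coefficients, and since the `λ_a` are distinct these are
exactly the diagonal ones. By cyclicity of the trace, the diagonal coefficient
`K_{a,a} = λ_a^{-α} tr(ν P_a ω_{-t}^α P_a)` equals `∑_b λ_b^α λ_a^{-α} p_{ν,t}(b,a)`.
-/

open Filter Topology Complex

theorem tendsto_average_exp_mul_I (c : ℝ) :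
    Tendsto (fun R : ℝ => (1 / R : ℝ) • ∫ θ in (0 : ℝ)..R, cexp (c * θ * I)) atTop
      (𝓝 (if c = 0 then 1 else 0)) := by
  split_ifs with hc
  · subst hc
    refine tendsto_const_nhds.congr' ?_
    filter_upwards [eventually_ne_atTop 0] with R hR
    simp [hR]
  · have hcI : (c : ℂ) * I ≠ 0 := by simp [hc]
    refine Tendsto.zero_smul_isBoundedUnder_le ?_
      (isBoundedUnder_of ⟨2 / ‖(c : ℂ) * I‖, fun R => ?_⟩)
    · exact tendsto_inv_atTop_zero.congr fun R => (one_div R).symm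
    · have hunit (x : ℝ) : ‖cexp ((c : ℂ) * I * x)‖ = 1 := by
        rw [mul_right_comm]; exact_mod_cast norm_exp_ofReal_mul_I (c * x)
      simp only [Function.comp_apply, mul_right_comm (c : ℂ) _ I]
      rw [integral_exp_mul_complex hcI, norm_div]
      gcongr
      calc _ ≤ ‖cexp ((c : ℂ) * I * R)‖ + ‖cexp ((c : ℂ) * I * (0 : ℝ))‖ := norm_sub_le _ _
        _ = 2 := by rw [hunit, hunit]; norm_num

theorem tendsto_average_sum_exp_mul_I {ι : Type*} [Fintype ι] (c : ι → ℝ) (K : ι → ℂ) :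
    Tendsto (fun R : ℝ => (1 / R : ℝ) • ∫ θ in (0 : ℝ)..R, ∑ i, cexp (c i * θ * I) * K i) atTop
      (𝓝 (∑ i, if c i = 0 then K i else 0)) := by
  have hint (i : ι) (R : ℝ) : IntervalIntegrable (fun θ : ℝ => cexp (c i * θ * I) * K i)
      MeasureTheory.volume 0 R := by
    apply Continuous.intervalIntegrable; fun_prop
  simp only [intervalIntegral.integral_finsetSum fun i _ => hint i _, Finset.smul_sum,
    intervalIntegral.integral_mul_const, ← smul_mul_assoc]
  refine tendsto_finsetSum _ fun i _ => ?_
  simpa only [ite_mul, one_mul, zero_mul] using (tendsto_average_exp_mul_I (c i)).mul_const (K i)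

theorem sum_smul_mul_sum_smul_of_orthogonal {ι S A : Type*} [Fintype ι] [CommSemiring S]
    [Semiring A] [Algebra S A] (P : ι → A) (hPidem : ∀ a, P a * P a = P a)
    (hPorth : ∀ a b, a ≠ b → P a * P b = 0) (u v : ι → S) :
    (∑ a, u a • P a) * (∑ a, v a • P a) = ∑ a, (u a * v a) • P a := by
  rw [Finset.sum_mul_sum]
  refine Finset.sum_congr rfl fun a _ => ?_
  rw [Finset.sum_eq_single a (fun b _ hb => by
    rw [smul_mul_smul_comm, hPorth a b hb.symm, smul_zero]) (by simp)]
  rw [smul_mul_smul_comm, hPidem]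

theorem ofReal_cpow_I_mul_mul_ofReal_cpow_sub {x y : ℝ} (hx : 0 < x) (hy : 0 < y) (θ : ℝ)
    (z : ℂ) :
    (x : ℂ) ^ (I * θ) * (y : ℂ) ^ (z - I * θ) =
      cexp ((Real.log x - Real.log y : ℝ) * θ * I) * (y : ℂ) ^ z := by
  simp only [cpow_def_of_ne_zero (ofReal_ne_zero.mpr hx.ne'),
    cpow_def_of_ne_zero (ofReal_ne_zero.mpr hy.ne'), ← exp_add]
  congr 1
  push_cast [← ofReal_log hx.le, ← ofReal_log hy.le]
  ring

section omegaPow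

variable {n 𝒜 : Type*} [Fintype n] [Fintype 𝒜] (lam : 𝒜 → ℝ) (P : 𝒜 → Matrix n n ℂ)

theorem omegaPow_mul_omegaPow [DecidableEq n] (hPidem : ∀ a, P a * P a = P a)
    (hPorth : ∀ a b, a ≠ b → P a * P b = 0) (hlam : ∀ a, lam a ≠ 0) (z w : ℂ) :
    omegaPow lam P z * omegaPow lam P w = omegaPow lam P (z + w) := by
  rw [omegaPow, omegaPow, sum_smul_mul_sum_smul_of_orthogonal P hPidem hPorth, omegaPow]
  simp only [cpow_add _ _ (ofReal_ne_zero.mpr (hlam _))]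

theorem trace_mul_omegaPow (X : Matrix n n ℂ) (z : ℂ) :
    (X * omegaPow lam P z).trace = ∑ a, (lam a : ℂ) ^ z * (X * P a).trace := by
  simp only [omegaPow, Matrix.mul_sum, Matrix.mul_smul, Matrix.trace_sum, Matrix.trace_smul,
    smul_eq_mul]

theorem trace_mul_omegaPow_mul_omegaPow (X Y : Matrix n n ℂ) (z w : ℂ) :
    (X * omegaPow lam P z * Y * omegaPow lam P w).trace =
      ∑ p : 𝒜 × 𝒜, (lam p.1 : ℂ) ^ z * (lam p.2 : ℂ) ^ w * (X * P p.1 * Y * P p.2).trace := by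
  simp only [omegaPow, Matrix.sum_mul, Matrix.mul_smul, Matrix.smul_mul,
    Matrix.trace_sum, Matrix.trace_smul, smul_eq_mul, Fintype.sum_prod_type, Finset.mul_sum]
  rw [Finset.sum_comm]
  exact Finset.sum_congr rfl fun b _ => Finset.sum_congr rfl fun a _ => by ring

theorem sum_cpow_mul_ttm [DecidableEq n] (H ν : Matrix n n ℂ) (t : ℝ) (z : ℂ) (a : 𝒜) :
    ∑ b, (lam b : ℂ) ^ z * ttm H P ν t b a =
      (ν * P a * (exp ((I * t) • H) * omegaPow lam P z * exp ((-(I * t)) • H)) * P a).trace := by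
  set U := exp ((I * t) • H)
  set V := exp ((-(I * t)) • H)
  calc ∑ b, (lam b : ℂ) ^ z * ttm H P ν t b a = (V * P a * ν * P a * U * omegaPow lam P z).trace :=
        (trace_mul_omegaPow lam P _ z).symm
    _ = ((ν * P a * U * omegaPow lam P z) * (V * P a)).trace := by
        rw [Matrix.trace_mul_comm (ν * P a * U * omegaPow lam P z)]; simp only [mul_assoc]
    _ = _ := by simp only [mul_assoc]

end omegaPow

theorem st_cyr_formula_general
    {n 𝒜 : Type*} [Fintype n] [DecidableEq n]
    [Fintype 𝒜]
    (H : Matrix n n ℂ)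
    (P : 𝒜 → Matrix n n ℂ)
    (hPidem : ∀ a, P a * P a = P a)
    (hPorth : ∀ a b, a ≠ b → P a * P b = 0)
    (lam : 𝒜 → ℝ) (hlampos : ∀ a, 0 < lam a)
    (hlaminj : Function.Injective lam)
    (ν : Matrix n n ℂ)
    (t : ℝ) (α : ℂ) :
    Filter.Tendsto
      (fun R : ℝ => (1 / R : ℝ) •
        ∫ θ in (0:ℝ)..R,
          (ν * omegaPow lam P (Complex.I * θ) *
            (exp ((Complex.I * t) • H) * omegaPow lam P α * exp ((-(Complex.I * t)) • H)) *
            omegaPow lam P (-α) * omegaPow lam P (-(Complex.I * θ))).trace)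
      Filter.atTop
      (nhds (∑ x : 𝒜 × 𝒜, (lam x.1 : ℂ) ^ α * (lam x.2 : ℂ) ^ (-α) * ttm H P ν t x.1 x.2)) := by
  classical
  set A := exp ((I * t) • H) * omegaPow lam P α * exp ((-(I * t)) • H)
  set c : 𝒜 × 𝒜 → ℝ := fun p => Real.log (lam p.1) - Real.log (lam p.2)
  set K : 𝒜 × 𝒜 → ℂ := fun p => (lam p.2 : ℂ) ^ (-α) * (ν * P p.1 * A * P p.2).trace
  have integrand (θ : ℝ) :
      (ν * omegaPow lam P (I * θ) * A * omegaPow lam P (-α) * omegaPow lam P (-(I * θ))).trace =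
        ∑ p, cexp (c p * θ * I) * K p := by
    rw [mul_assoc _ (omegaPow lam P (-α)), omegaPow_mul_omegaPow lam P hPidem hPorth
      (fun a => (hlampos a).ne'), ← sub_eq_add_neg, trace_mul_omegaPow_mul_omegaPow]
    refine Finset.sum_congr rfl fun p _ => ?_
    rw [ofReal_cpow_I_mul_mul_ofReal_cpow_sub (hlampos _) (hlampos _), mul_assoc]
  have resonant (p : 𝒜 × 𝒜) : c p = 0 ↔ p.1 = p.2 :=
    sub_eq_zero.trans <| (Real.log_injOn_pos.eq_iff (hlampos _) (hlampos _)).trans hlaminj.eq_iff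
  have limit : ∑ p, (if c p = 0 then K p else 0) =
      ∑ x : 𝒜 × 𝒜, (lam x.1 : ℂ) ^ α * (lam x.2 : ℂ) ^ (-α) * ttm H P ν t x.1 x.2 := by
    simp only [resonant, Fintype.sum_prod_type, Finset.sum_ite_eq, Finset.mem_univ, if_true, K]
    rw [Finset.sum_comm]
    refine Finset.sum_congr rfl fun a _ => ?_
    rw [← sum_cpow_mul_ttm, Finset.mul_sum]
    exact Finset.sum_congr rfl fun b _ => by ring
  simpa only [integrand, limit] using tendsto_average_sum_exp_mul_I c K

theorem st_cyr_formula
    {n 𝒜 : Type*} [Fintype n] [DecidableEq n] [Nonempty n]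
    [Fintype 𝒜] [DecidableEq 𝒜] [Nonempty 𝒜]
    (H : Matrix n n ℂ) (hH : H.IsHermitian)
    (P : 𝒜 → Matrix n n ℂ)
    (hPherm : ∀ a, (P a).IsHermitian)
    (hPidem : ∀ a, P a * P a = P a)
    (hPne : ∀ a, P a ≠ 0)
    (hPorth : ∀ a b, a ≠ b → P a * P b = 0)
    (hPsum : ∑ a, P a = 1)
    (lam : 𝒜 → ℝ) (hlampos : ∀ a, 0 < lam a)
    (hlaminj : Function.Injective lam)
    (hlamsum : ∑ a, (lam a : ℂ) * (P a).trace = 1)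
    (ν : Matrix n n ℂ) (hν : ν.PosSemidef) (hνtr : ν.trace = 1)
    (t : ℝ) (α : ℂ) :
    Filter.Tendsto
      (fun R : ℝ => (1 / R : ℝ) •
        ∫ θ in (0:ℝ)..R,
          (ν * omegaPow lam P (Complex.I * θ) *
            (exp ((Complex.I * t) • H) * omegaPow lam P α * exp ((-(Complex.I * t)) • H)) *
            omegaPow lam P (-α) * omegaPow lam P (-(Complex.I * θ))).trace)
      Filter.atTop
      (nhds (∑ x : 𝒜 × 𝒜, (lam x.1 : ℂ) ^ α * (lam x.2 : ℂ) ^ (-α) * ttm H P ν t x.1 x.2)) :=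
  st_cyr_formula_general H P hPidem hPorth lam hlampos hlaminj ν t α
end
end

section
/- (Domination lemma underlying the finite-dimensional analog of Theorem 4(2).) Let ν₁, ν₂ be density matrices and c ≥ 0 a real number such that c·ν̄₂ − ν̄₁ is positive semidefinite, where ν̄ = ∑_a P_a·ν·P_a denotes the pinching. Then for every t ∈ ℝ and all a, b ∈ 𝒜, the (real, nonnegative) values of the two-times measurement statistics satisfy p_{ν₁,t}(b,a) ≤ c·p_{ν₂,t}(b,a). -/
/-!
With `B = P_b · exp(−itH) · P_a`, the statistics is `p_{ν,t}(b,a) = tr(B ν̄ B*)`: the outer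
`P_a`'s only see the `a`-block of the pinching, and cyclicity absorbs one `P_b` into the other.
Conjugation by `B` preserves positivity and the trace of a positive matrix is nonnegative, so
`c · p_{ν₂,t}(b,a) − p_{ν₁,t}(b,a) = tr(B (c ν̄₂ − ν̄₁) B*) ≥ 0`.
-/

open Matrix NormedSpace
open scoped ComplexOrder

noncomputable section

theorem Matrix.PosSemidef.re_trace_conj_le {m n : Type*} [Fintype m] [Fintype n]
    {A₁ A₂ : Matrix n n ℂ} (h : (A₂ - A₁).PosSemidef) (B : Matrix m n ℂ) :
    (B * A₁ * Bᴴ).trace.re ≤ (B * A₂ * Bᴴ).trace.re := by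
  have h₀ := (Complex.nonneg_iff.mp (h.mul_mul_conjTranspose_same B).trace_nonneg).1
  rwa [Matrix.mul_sub, Matrix.sub_mul, trace_sub, Complex.sub_re, sub_nonneg] at h₀

theorem Matrix.IsHermitian.conjTranspose_exp_neg_I_mul_smul {n : Type*} [Fintype n]
    [DecidableEq n] {H : Matrix n n ℂ} (hH : H.IsHermitian) (t : ℝ) :
    (NormedSpace.exp ((-(Complex.I * t)) • H))ᴴ = NormedSpace.exp ((Complex.I * t) • H) := by
  rw [← exp_conjTranspose, conjTranspose_smul, hH.eq]
  congr 2
  simp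

section Pinching

variable {n 𝒜 : Type*} [Fintype n] [Fintype 𝒜] {P : 𝒜 → Matrix n n ℂ}

theorem mul_pinch_mul_self (hPidem : ∀ a, P a * P a = P a)
    (hPorth : ∀ a b, a ≠ b → P a * P b = 0) (ν : Matrix n n ℂ) (a : 𝒜) :
    P a * pinch P ν * P a = P a * ν * P a := by
  rw [pinch, Finset.mul_sum, Finset.sum_mul, Finset.sum_eq_single a]
  · rw [show P a * (P a * ν * P a) * P a = (P a * P a) * ν * (P a * P a) by noncomm_ring,
      hPidem a]
  · intro x _ hx
    rw [show P a * (P x * ν * P x) * P a = (P a * P x) * ν * (P x * P a) by noncomm_ring,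
      hPorth a x hx.symm, zero_mul, zero_mul]
  · simp

theorem ttm_eq_trace_conj_pinch [DecidableEq n] {H : Matrix n n ℂ} (hH : H.IsHermitian)
    (hPherm : ∀ a, (P a).IsHermitian) (hPidem : ∀ a, P a * P a = P a)
    (hPorth : ∀ a b, a ≠ b → P a * P b = 0) (ν : Matrix n n ℂ) (t : ℝ) (b a : 𝒜) :
    ttm H P ν t b a =
      (P b * exp ((-(Complex.I * t)) • H) * P a * pinch P ν *
        (P b * exp ((-(Complex.I * t)) • H) * P a)ᴴ).trace := by
  have hE := hH.conjTranspose_exp_neg_I_mul_smul t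
  set E₁ := exp ((-(Complex.I * t)) • H)
  set E₂ := exp ((Complex.I * t) • H)
  have hB : (P b * E₁ * P a)ᴴ = P a * E₂ * P b := by
    simp only [conjTranspose_mul, (hPherm a).eq, (hPherm b).eq, hE, mul_assoc]
  calc ttm H P ν t b a = (E₁ * P a * ν * P a * E₂ * P b * P b).trace := by
        rw [ttm, mul_assoc _ (P b) (P b), hPidem]
    _ = (P b * (E₁ * (P a * ν * P a) * E₂ * P b)).trace := by
        rw [trace_mul_comm (P b)]; congr 1; noncomm_ring
    _ = (P b * E₁ * P a * pinch P ν * (P b * E₁ * P a)ᴴ).trace := by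
        rw [hB, ← mul_pinch_mul_self hPidem hPorth]; congr 1; noncomm_ring

end Pinching

theorem pinching_domination_general
    {n 𝒜 : Type*} [Fintype n] [DecidableEq n]
    [Fintype 𝒜]
    (H : Matrix n n ℂ) (hH : H.IsHermitian)
    (P : 𝒜 → Matrix n n ℂ)
    (hPherm : ∀ a, (P a).IsHermitian)
    (hPidem : ∀ a, P a * P a = P a)
    (hPorth : ∀ a b, a ≠ b → P a * P b = 0)
    (ν₁ ν₂ : Matrix n n ℂ)
    (c : ℝ)
    (hdom : ((c : ℂ) • pinch P ν₂ - pinch P ν₁).PosSemidef)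
    (t : ℝ) (a b : 𝒜) :
    (ttm H P ν₁ t b a).re ≤ c * (ttm H P ν₂ t b a).re := by
  have h := hdom.re_trace_conj_le (P b * exp ((-(Complex.I * t)) • H) * P a)
  rwa [Matrix.mul_smul, Matrix.smul_mul, trace_smul, smul_eq_mul, Complex.re_ofReal_mul,
    ← ttm_eq_trace_conj_pinch hH hPherm hPidem hPorth,
    ← ttm_eq_trace_conj_pinch hH hPherm hPidem hPorth] at h

theorem pinching_domination
    {n 𝒜 : Type*} [Fintype n] [DecidableEq n] [Nonempty n]
    [Fintype 𝒜] [DecidableEq 𝒜] [Nonempty 𝒜]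
    (H : Matrix n n ℂ) (hH : H.IsHermitian)
    (P : 𝒜 → Matrix n n ℂ)
    (hPherm : ∀ a, (P a).IsHermitian)
    (hPidem : ∀ a, P a * P a = P a)
    (hPne : ∀ a, P a ≠ 0)
    (hPorth : ∀ a b, a ≠ b → P a * P b = 0)
    (hPsum : ∑ a, P a = 1)
    (ν₁ ν₂ : Matrix n n ℂ)
    (hν₁ : ν₁.PosSemidef) (hν₁tr : ν₁.trace = 1)
    (hν₂ : ν₂.PosSemidef) (hν₂tr : ν₂.trace = 1)
    (c : ℝ) (hc : 0 ≤ c)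
    (hdom : ((c : ℂ) • pinch P ν₂ - pinch P ν₁).PosSemidef)
    (t : ℝ) (a b : 𝒜) :
    (ttm H P ν₁ t b a).re ≤ c * (ttm H P ν₂ t b a).re :=
  pinching_domination_general H hH P hPherm hPidem hPorth ν₁ ν₂ c hdom t a b
end
end
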